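/- For all integers n ≥ 2 and k ≥ 1, the sequence defined by O(n,1) = T(n+1) and O(n,k) = O(n,k-1)·T(n) − n² + 1, where T(m) = m(m+1)/2 is the m-th triangular number, satisfies the closed form O(n,k) = ((n+4)·(n(n+1)/2)^k + 2(n+1)) / (n+2). -/

import Mathlib

/-!
With `T = n(n+1)/2`, the recursion is the affine map `x ↦ T x + (1 - n²)`, whose fixed point is
`2(n+1)/(n+2)`. Hence `(n+2) O(n,k) - 2(n+1)` is multiplied by `T` at each step, and equals
`(n+4) T` at `k = 1`.
-/

/-- `c / d` is the fixed point of `x ↦ t x + b`, cleared of denominators. -/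
theorem mul_eq_pow_add_of_affine_rec {R : Type*} [CommRing R] (u : ℕ → R) (a b c d t : R)
    (hfix : c * t + d * b = c) (h1 : d * u 1 = a * t + c)
    (hrec : ∀ k, 1 ≤ k → u (k + 1) = u k * t + b) :
    ∀ k, 1 ≤ k → d * u k = a * t ^ k + c := by
  intro k hk
  induction k, hk using Nat.le_induction with
  | base => simpa using h1
  | succ k hk ih =>
    rw [hrec k hk]
    linear_combination t * ih + hfix

theorem two_mul_mul_add_one_ediv_two (n : ℤ) : 2 * (n * (n + 1) / 2) = n * (n + 1) :=
  Int.mul_ediv_cancel' (Int.even_mul_succ_self n).two_dvd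

theorem stmt_0 (n : ℤ) (hn : 2 ≤ n) (O : ℕ → ℤ)
    (h1 : O 1 = (n + 1) * (n + 2) / 2)
    (hrec : ∀ k : ℕ, 2 ≤ k → O k = O (k - 1) * (n * (n + 1) / 2) - n ^ 2 + 1) :
    ∀ k : ℕ, 1 ≤ k →
      O k = ((n + 4) * (n * (n + 1) / 2) ^ k + 2 * (n + 1)) / (n + 2) := by
  set T := n * (n + 1) / 2
  have hT : 2 * T = n * (n + 1) := two_mul_mul_add_one_ediv_two n
  have hO1 : 2 * O 1 = (n + 1) * (n + 2) := by
    simpa only [h1, add_assoc, one_add_one_eq_two] using two_mul_mul_add_one_ediv_two (n + 1)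
  have key : ∀ k, 1 ≤ k → (n + 2) * O k = (n + 4) * T ^ k + 2 * (n + 1) := by
    refine mul_eq_pow_add_of_affine_rec O _ (1 - n ^ 2) _ _ _ ?_ ?_ fun k hk => ?_
    · linear_combination (n + 1) * hT
    · rw [show O 1 = T + n + 1 by linarith]
      linear_combination -hT
    · rw [hrec (k + 1) (by omega), Nat.add_sub_cancel]
      ring
  intro k hk
  rw [← key k hk, Int.mul_ediv_cancel_left _ (by omega)]
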